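/- Let λ ≥ 1 and β = 1 + 1/λ. Then β·ψ'(β) - 1 > 0, and 4(1+λ) - 4λ/(Γ(3-β)Γ(β)) > 0; consequently the diagonal matrix Σ = diag(4(1+λ) - 4λ/(Γ(3-β)Γ(β)), (βψ'(β)-1)/λ³) is positive definite. -/

import Mathlib

open MeasureTheory Real

/-- The digamma function `ψ(x) = (log ∘ Γ)'(x)`. -/
noncomputable def digamma (x : ℝ) : ℝ :=
  deriv (fun y : ℝ => Real.log (Real.Gamma y)) x

/-- The trigamma function `ψ'`. -/
noncomputable def trigamma (x : ℝ) : ℝ :=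
  deriv digamma x

/-!
Log-convexity of `Γ` gives `ψ' ≥ 0` on `(0, ∞)`; telescoping the recurrence
`ψ'(x) = 1/x² + ψ'(x + 1)` against `1/x² > 1/x - 1/(x + 1)` upgrades this to `ψ'(x) ≥ 1/x`, and one
more step of the recurrence gives `x ψ'(x) ≥ 1/x + x/(x + 1) > 1`. In particular `ψ' > 0`, so
`log Γ` is strictly convex and `Γ(2 - t) Γ(2 + t) > Γ(2)² = 1`. For `t = β - 1 = 1/λ` this reads
`β Γ(3 - β) Γ(β) > 1`, which is the second inequality because `λ β = λ + 1`.
-/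

open Set Filter Topology

section Trigamma

variable {x : ℝ}

theorem Real.analyticAt_Gamma (hx : ∀ m : ℕ, x ≠ -m) : AnalyticAt ℝ Gamma x := by
  have hx' : ∀ m : ℕ, (x : ℂ) ≠ -m := fun m h => hx m (by exact_mod_cast h)
  have hGamma : AnalyticAt ℂ Complex.Gamma x := by
    simpa [Pi.inv_def] using (Complex.differentiable_one_div_Gamma.analyticAt (x : ℂ)).inv
      (by simpa using Complex.Gamma_ne_zero hx')
  convert hGamma.re_ofReal using 2 with y
  rw [Complex.Gamma_ofReal, Complex.ofReal_re]

theorem analyticAt_log_Gamma (hx : 0 < x) : AnalyticAt ℝ (fun y => log (Gamma y)) x :=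
  (analyticAt_Gamma fun m => ((neg_nonpos.2 m.cast_nonneg).trans_lt hx).ne').log
    (Gamma_pos_of_pos hx)

theorem differentiableAt_digamma (hx : 0 < x) : DifferentiableAt ℝ digamma x := by
  have hlog : AnalyticOnNhd ℝ (fun y => log (Gamma y)) (Ioi 0) :=
    fun _ hy => analyticAt_log_Gamma hy
  exact (hlog.deriv x hx).differentiableAt

theorem digamma_add_one (hx : 0 < x) : digamma (x + 1) = digamma x + x⁻¹ := by
  unfold digamma
  rw [← deriv_comp_add_const, ← Real.deriv_log,
    ← deriv_fun_add (analyticAt_log_Gamma hx).differentiableAt (differentiableAt_log hx.ne')]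
  apply EventuallyEq.deriv_eq
  filter_upwards [eventually_gt_nhds hx] with y hy
  rw [Gamma_add_one hy.ne', log_mul hy.ne' (Gamma_pos_of_pos hy).ne', add_comm]

theorem trigamma_add_one (hx : 0 < x) : trigamma (x + 1) = trigamma x - (x ^ 2)⁻¹ := by
  have h : (fun y => digamma (y + 1)) =ᶠ[𝓝 x] fun y => digamma y + y⁻¹ := by
    filter_upwards [eventually_gt_nhds hx] with y hy using digamma_add_one hy
  unfold trigamma
  rw [← deriv_comp_add_const, h.deriv_eq,
    deriv_fun_add (differentiableAt_digamma hx) (differentiableAt_inv hx.ne'), deriv_inv,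
    sub_eq_add_neg]

theorem monotoneOn_digamma : MonotoneOn digamma (Ioi 0) :=
  convexOn_log_Gamma.monotoneOn_deriv fun _ hy => (analyticAt_log_Gamma hy).differentiableAt

theorem trigamma_nonneg (hx : 0 < x) : 0 ≤ trigamma x := by
  rw [trigamma, ← derivWithin_of_isOpen isOpen_Ioi hx]
  exact monotoneOn_digamma.derivWithin_nonneg

theorem inv_sub_inv_add_le_trigamma (n : ℕ) (hx : 0 < x) : x⁻¹ - (x + n)⁻¹ ≤ trigamma x := by
  induction n generalizing x with
  | zero => simpa using trigamma_nonneg hx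
  | succ n ih =>
    have hstep : x⁻¹ - (x + 1)⁻¹ ≤ (x ^ 2)⁻¹ := by
      rw [inv_sub_inv hx.ne' (by positivity), ← one_div,
        div_le_div_iff₀ (by positivity) (by positivity)]
      nlinarith
    have htail := ih (x := x + 1) (by positivity)
    rw [trigamma_add_one hx, add_assoc, add_comm 1 (n : ℝ)] at htail
    push_cast
    linarith

theorem inv_le_trigamma (hx : 0 < x) : x⁻¹ ≤ trigamma x := by
  have hlim : Tendsto (fun n : ℕ => x⁻¹ - (x + n)⁻¹) atTop (𝓝 (x⁻¹ - 0)) :=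
    tendsto_const_nhds.sub
      (tendsto_atTop_add_const_left _ x tendsto_natCast_atTop_atTop).inv_tendsto_atTop
  rw [sub_zero] at hlim
  exact le_of_tendsto' hlim fun n => inv_sub_inv_add_le_trigamma n hx

theorem one_lt_mul_trigamma (hx : 0 < x) : 1 < x * trigamma x := by
  have h := inv_le_trigamma (x := x + 1) (by positivity)
  rw [trigamma_add_one hx] at h
  have hgap : 1 < x * ((x ^ 2)⁻¹ + (x + 1)⁻¹) := by
    field_simp
    nlinarith
  nlinarith

theorem trigamma_pos (hx : 0 < x) : 0 < trigamma x :=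
  pos_of_mul_pos_right (one_pos.trans (one_lt_mul_trigamma hx)) hx.le

end Trigamma

theorem strictConvexOn_log_Gamma : StrictConvexOn ℝ (Ioi 0) fun y => log (Gamma y) :=
  strictConvexOn_of_deriv2_pos' (convex_Ioi 0)
    (fun _ hy => (analyticAt_log_Gamma hy).continuousAt.continuousWithinAt)
    fun _ hy => trigamma_pos hy

theorem one_lt_Gamma_two_sub_mul_Gamma_two_add {t : ℝ} (ht0 : 0 < t) (ht2 : t < 2) :
    1 < Gamma (2 - t) * Gamma (2 + t) := by
  have hmid := strictConvexOn_log_Gamma.2 (x := 2 - t) (y := 2 + t) (sub_pos.2 ht2)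
    (mem_Ioi.2 (by positivity)) (by linarith) one_half_pos one_half_pos (add_halves 1)
  have hΓ2 : log (Gamma 2) = 0 := by simp
  rw [← log_pos_iff (by positivity), log_mul (Gamma_pos_of_pos (sub_pos.2 ht2)).ne'
    (Gamma_pos_of_pos (by positivity)).ne']
  simp only [smul_eq_mul] at hmid
  rw [show 1 / 2 * (2 - t) + 1 / 2 * (2 + t) = (2 : ℝ) by ring, hΓ2] at hmid
  linarith

theorem sigma_matrix_posDef (l : ℝ) (hl : 1 ≤ l) :
    let β : ℝ := 1 + 1 / l
    0 < β * trigamma β - 1 ∧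
    0 < 4 * (1 + l) - 4 * l / (Real.Gamma (3 - β) * Real.Gamma β) ∧
    (!![4 * (1 + l) - 4 * l / (Real.Gamma (3 - β) * Real.Gamma β), 0;
        0, (β * trigamma β - 1) / l ^ 3] : Matrix (Fin 2) (Fin 2) ℝ).PosDef := by
  intro β
  have hl0 : 0 < l := by linarith
  have ht0 : 0 < 1 / l := by positivity
  have ht2 : 1 / l < 2 := by rw [div_lt_iff₀ hl0]; linarith
  have hlβ : l * β = l + 1 := by simp only [β]; field_simp
  have hβ0 : 0 < β := by positivity
  have hΓ : 1 < β * (Gamma (3 - β) * Gamma β) := by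
    have h := one_lt_Gamma_two_sub_mul_Gamma_two_add ht0 ht2
    rwa [show 2 + 1 / l = β + 1 by ring, Gamma_add_one hβ0.ne', show 2 - 1 / l = 3 - β by ring,
      mul_left_comm] at h
  have hΓ0 : 0 < Gamma (3 - β) * Gamma β := pos_of_mul_pos_right (one_pos.trans hΓ) hβ0.le
  have hfirst : 0 < β * trigamma β - 1 := sub_pos.2 (one_lt_mul_trigamma hβ0)
  have hsecond : 0 < 4 * (1 + l) - 4 * l / (Gamma (3 - β) * Gamma β) := by
    rw [sub_pos, div_lt_iff₀ hΓ0]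
    nlinarith [mul_lt_mul_of_pos_left hΓ hl0, hlβ]
  refine ⟨hfirst, hsecond, ?_⟩
  rw [← Matrix.diagonal_vec2, Matrix.posDef_diagonal_iff, Fin.forall_fin_two]
  exact ⟨hsecond, div_pos hfirst (by positivity)⟩
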